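/- arXiv:2002.11275 — 2 statements merged into one kernel-verified Lean document; each statement's English description precedes it below -/
import Mathlib

section
/- Let G be a locally compact Hausdorff topological group and N a closed normal subgroup of G. If both N and the quotient group G/N have the fixed point property (i.e., every continuous affine action on a nonempty compact convex subset of a locally convex topological vector space has a fixed point), then G also has the fixed point property. -/
open Filter Set Topology

/-- A topological group `G` has the fixed point property if every continuous affine
action of `G` on a nonempty compact convex subset `K` of a locally convex topological
vector space has a fixed point in `K`. -/
def HasFixedPointProperty (G : Type) [Group G] [TopologicalSpace G] : Prop :=
  ∀ (E : Type) [AddCommGroup E] [Module ℝ E] [TopologicalSpace E]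
    [IsTopologicalAddGroup E] [ContinuousSMul ℝ E] [LocallyConvexSpace ℝ E]
    (K : Set E), IsCompact K → Convex ℝ K → K.Nonempty →
  ∀ act : G → E → E,
    (∀ g, Set.MapsTo (act g) K K) →
    (∀ x ∈ K, act 1 x = x) →
    (∀ g₁ g₂ : G, ∀ x ∈ K, act (g₁ * g₂) x = act g₁ (act g₂ x)) →
    ContinuousOn (fun p : G × E => act p.1 p.2) (Set.univ ×ˢ K) →
    (∀ g : G, ∀ x ∈ K, ∀ y ∈ K, ∀ t : ℝ, 0 ≤ t → t ≤ 1 →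
      act g (t • x + (1 - t) • y) = t • act g x + (1 - t) • act g y) →
    ∃ x ∈ K, ∀ g : G, act g x = x


lemma isCompact_of_pairwise_inseparable {E : Type*} [TopologicalSpace E] {S T : Set E}
    (h : ∀ x ∈ S, ∀ y ∈ S, Inseparable x y) (hTS : T ⊆ S) : IsCompact T := by
  intro f hne hf
  rcases T.eq_empty_or_nonempty with rfl | ⟨x₀, hx₀⟩
  · rw [Filter.principal_empty, le_bot_iff] at hf
    exact absurd hf hne.ne
  · refine ⟨x₀, hx₀, ?_⟩
    have hle : f ≤ nhds x₀ := by
      refine hf.trans fun U hU y hy => ?_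
      have hxy : Inseparable x₀ y := h x₀ (hTS hx₀) y (hTS hy)
      exact mem_of_mem_nhds (hxy.nhds_eq ▸ hU)
    exact ClusterPt.of_le_nhds hle


lemma lemA (G : Type) [Group G] [TopologicalSpace G] [IsTopologicalGroup G]
    (N : Subgroup G) [hNn : N.Normal]
    (hN : HasFixedPointProperty N) (hQ : HasFixedPointProperty (G ⧸ N))
    (E : Type) [AddCommGroup E] [Module ℝ E] [TopologicalSpace E]
    [IsTopologicalAddGroup E] [ContinuousSMul ℝ E] [LocallyConvexSpace ℝ E]
    (K : Set E) (hK : IsCompact K) (hKc : Convex ℝ K) (hKne : K.Nonempty)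
    (act : G → E → E)
    (hmaps : ∀ g, Set.MapsTo (act g) K K)
    (hone : ∀ x ∈ K, act 1 x = x)
    (hmul : ∀ g₁ g₂ : G, ∀ x ∈ K, act (g₁ * g₂) x = act g₁ (act g₂ x))
    (hcont : ContinuousOn (fun p : G × E => act p.1 p.2) (Set.univ ×ˢ K))
    (haff : ∀ g : G, ∀ x ∈ K, ∀ y ∈ K, ∀ t : ℝ, 0 ≤ t → t ≤ 1 →
      act g (t • x + (1 - t) • y) = t • act g x + (1 - t) • act g y)
    (hFcpt : IsCompact {x ∈ K | ∀ g ∈ N, act g x = x}) :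
    ∃ x ∈ K, ∀ g : G, act g x = x := by
  classical
  set F : Set E := {x ∈ K | ∀ g ∈ N, act g x = x} with hF
  have hFK : F ⊆ K := fun x hx => hx.1
  -- F is nonempty, by the fixed point property of N
  have hFne : F.Nonempty := by
    obtain ⟨x, hxK, hx⟩ := hN E K hK hKc hKne (fun n x => act (n : G) x)
      (fun n => hmaps (n : G)) hone
      (fun n₁ n₂ x hx => hmul (n₁ : G) (n₂ : G) x hx)
      (by
        have hc : Continuous (fun p : N × E => (((p.1 : G), p.2) : G × E)) :=
          (continuous_subtype_val.comp continuous_fst).prodMk continuous_snd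
        exact hcont.comp hc.continuousOn (fun p hp => ⟨trivial, hp.2⟩))
      (fun n x hx y hy t h0 h1 => haff (n : G) x hx y hy t h0 h1)
    exact ⟨x, hxK, fun g hg => hx ⟨g, hg⟩⟩
  -- F is convex
  have hFconv : Convex ℝ F := by
    intro x hx y hy a b ha hb hab
    have hb' : b = 1 - a := by linarith
    subst hb'
    refine ⟨hKc hx.1 hy.1 ha hb hab, fun g hg => ?_⟩
    rw [haff g x hx.1 y hy.1 a ha (by linarith), hx.2 g hg, hy.2 g hg]
  -- G maps F to F
  have hGF : ∀ g : G, Set.MapsTo (act g) F F := by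
    intro g x hx
    refine ⟨hmaps g hx.1, fun n hn => ?_⟩
    have hmem : g⁻¹ * n * g ∈ N := by
      have := hNn.conj_mem n hn g⁻¹
      simpa using this
    calc act n (act g x) = act (n * g) x := (hmul n g x hx.1).symm
      _ = act (g * (g⁻¹ * n * g)) x := by rw [show g * (g⁻¹ * n * g) = n * g by group]
      _ = act g (act (g⁻¹ * n * g) x) := hmul _ _ x hx.1
      _ = act g x := by rw [hx.2 _ hmem]
  -- the induced map of the quotient on F
  have hwd : ∀ (g₁ g₂ : G), @Setoid.r _ (QuotientGroup.leftRel N) g₁ g₂ →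
      (fun x : F => act g₁ (x : E)) = (fun x : F => act g₂ (x : E)) := by
    intro g₁ g₂ hr
    rw [@QuotientGroup.leftRel_apply _ _ N] at hr
    funext x
    have : g₂ = g₁ * (g₁⁻¹ * g₂) := by group
    rw [this, hmul g₁ (g₁⁻¹ * g₂) (x : E) (hFK x.2), x.2.2 _ hr]
  set φ : G ⧸ N → F → E := fun q => Quotient.liftOn' q (fun g (x : F) => act g (x : E)) hwd
    with hφ
  have hφmk : ∀ (g : G) (x : F), φ (QuotientGroup.mk g) x = act g (x : E) := fun _ _ => rfl
  set act' : G ⧸ N → E → E := fun q x => if h : x ∈ F then φ q ⟨x, h⟩ else x with hact'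
  have hact'mk : ∀ (g : G), ∀ x ∈ F, act' (QuotientGroup.mk g) x = act g x := by
    intro g x hx
    simp only [hact', dif_pos hx, hφmk]
  -- continuity of the induced action
  have hψ : Continuous (fun p : (G ⧸ N) × F => φ p.1 p.2) := by
    rw [← (QuotientGroup.isOpenQuotientMap_mk.prodMap IsOpenQuotientMap.id).continuous_comp_iff]
    have : ((fun p : (G ⧸ N) × F => φ p.1 p.2) ∘
        (Prod.map (QuotientGroup.mk : G → G ⧸ N) id)) = fun p : G × F => act p.1 (p.2 : E) := rfl
    rw [this]
    exact hcont.comp_continuous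
      (continuous_fst.prodMk (continuous_subtype_val.comp continuous_snd))
      (fun p => ⟨trivial, hFK p.2.2⟩)
  have hcont' : ContinuousOn (fun p : (G ⧸ N) × E => act' p.1 p.2) (Set.univ ×ˢ F) := by
    rw [continuousOn_iff_continuous_restrict]
    have heq : (Set.univ ×ˢ F).restrict (fun p : (G ⧸ N) × E => act' p.1 p.2) =
        (fun p : (G ⧸ N) × F => φ p.1 p.2) ∘
          (fun q : (Set.univ ×ˢ F : Set ((G ⧸ N) × E)) =>
            ((q : (G ⧸ N) × E).1, ⟨(q : (G ⧸ N) × E).2, q.2.2⟩)) := by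
      funext q
      simp only [Set.restrict, Function.comp]
      show act' (q : (G ⧸ N) × E).1 (q : (G ⧸ N) × E).2 = _
      simp only [hact']
      exact dif_pos q.2.2
    change Continuous ((Set.univ ×ˢ F).restrict fun p : (G ⧸ N) × E => act' p.1 p.2)
    rw [heq]
    exact hψ.comp ((continuous_fst.comp continuous_subtype_val).prodMk
      ((continuous_snd.comp continuous_subtype_val).subtype_mk _))
  -- apply the fixed point property of the quotient
  obtain ⟨x, hxF, hfix⟩ := hQ E F hFcpt hFconv hFne act'
    (by
      intro q
      refine QuotientGroup.induction_on q ?_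
      intro g x hx
      rw [hact'mk g x hx]
      exact hGF g hx)
    (by
      intro x hx
      rw [show (1 : G ⧸ N) = QuotientGroup.mk 1 from rfl, hact'mk 1 x hx, hone x (hFK hx)])
    (by
      intro q₁ q₂ x hx
      refine QuotientGroup.induction_on q₁ (fun g₁ => QuotientGroup.induction_on q₂
        (fun g₂ => ?_))
      have h2 : act g₂ x ∈ F := hGF g₂ hx
      rw [show QuotientGroup.mk g₁ * QuotientGroup.mk g₂ = QuotientGroup.mk (g₁ * g₂) from rfl,
        hact'mk (g₁ * g₂) x hx, hact'mk g₂ x hx, hact'mk g₁ (act g₂ x) h2, hmul g₁ g₂ x (hFK hx)])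
    hcont'
    (by
      intro q x hx y hy t h0 h1
      refine QuotientGroup.induction_on q (fun g => ?_)
      have hc : t • x + (1 - t) • y ∈ F := hFconv hx hy h0 (by linarith) (by ring)
      rw [hact'mk g (t • x + (1 - t) • y) hc, hact'mk g x hx, hact'mk g y hy]
      exact haff g x (hFK hx) y (hFK hy) t h0 h1)
  exact ⟨x, hxF.1, fun g => (hact'mk g x hxF).symm.trans (hfix (QuotientGroup.mk g))⟩
/-- If `N` is a closed normal subgroup of a locally compact Hausdorff topological group `G`
and both `N` and `G ⧸ N` have the fixed point property, then so does `G`. -/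
theorem fixedPointProperty_of_normal_subgroup_of_quotient
    (G : Type) [Group G] [TopologicalSpace G] [IsTopologicalGroup G]
    [LocallyCompactSpace G] [T2Space G]
    (N : Subgroup G) [N.Normal] (hNclosed : IsClosed (N : Set G))
    (hN : HasFixedPointProperty N)
    (hQ : HasFixedPointProperty (G ⧸ N)) :
    HasFixedPointProperty G := by
  classical
  intro E _ _ _ _ _ _ K hK hKc hKne act hmaps hone hmul hcont haff
  -- set up the separation quotient of `E`
  haveI : IsTopologicalAddGroup (SeparationQuotient E) := ⟨⟩
  set mkE : E → SeparationQuotient E := SeparationQuotient.mk with hmkE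
  have hmkcont : Continuous mkE := SeparationQuotient.continuous_mk
  have hlin : IsLinearMap ℝ mkE := ⟨fun _ _ => rfl, fun _ _ => rfl⟩
  haveI : LocallyConvexSpace ℝ (SeparationQuotient E) := by
    refine (locallyConvexSpace_iff_exists_convex_subset_zero ℝ _).mpr (fun U hU => ?_)
    have h0 : (0 : SeparationQuotient E) = mkE 0 := rfl
    have hU' : mkE ⁻¹' U ∈ 𝓝 (0 : E) :=
      hmkcont.continuousAt.preimage_mem_nhds (h0 ▸ hU)
    obtain ⟨S, hS, hSc, hSU⟩ :=
      (locallyConvexSpace_iff_exists_convex_subset_zero ℝ E).mp ‹_› _ hU'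
    refine ⟨mkE '' S, ?_, hSc.is_linear_image hlin, ?_⟩
    · exact SeparationQuotient.isOpenQuotientMap_mk.isOpenMap.image_mem_nhds hS
    · rintro _ ⟨s, hs, rfl⟩; exact hSU hs
  set K' : Set (SeparationQuotient E) := mkE '' K with hK'def
  have hK' : IsCompact K' := hK.image hmkcont
  have hK'c : Convex ℝ K' := hKc.is_linear_image hlin
  have hK'ne : K'.Nonempty := hKne.image _
  -- the action preserves inseparability of points of `K`
  have hpres : ∀ g : G, ∀ x ∈ K, ∀ z ∈ K, Inseparable x z →
      Inseparable (act g x) (act g z) := by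
    intro g x hx z hz hxz
    have hc2 : Continuous (fun y : E => ((g, y) : G × E)) :=
      continuous_const.prodMk continuous_id
    have hcg : ContinuousOn (fun y => act g y) K :=
      hcont.comp hc2.continuousOn (fun y hy => ⟨trivial, hy⟩)
    have hres : Continuous (K.restrict (fun y => act g y)) := hcg.restrict
    have h2 : Inseparable (⟨x, hx⟩ : K) (⟨z, hz⟩ : K) :=
      (subtype_inseparable_iff (⟨x, hx⟩ : K) (⟨z, hz⟩ : K)).mpr hxz
    exact inseparable_iff_specializes_and.mpr
      ⟨(h2.specializes.map hres), (h2.specializes'.map hres)⟩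
  -- the induced action on the separation quotient
  set act' : G → SeparationQuotient E → SeparationQuotient E := fun g y =>
    if h : y ∈ K' then mkE (act g ((Set.mem_image _ _ _).mp h).choose) else y with hact'
  have key : ∀ g : G, ∀ z ∈ K, act' g (mkE z) = mkE (act g z) := by
    intro g z hz
    have hy : mkE z ∈ K' := Set.mem_image_of_mem _ hz
    obtain ⟨hx0K, hmk⟩ := ((Set.mem_image _ _ _).mp hy).choose_spec
    simp only [hact', dif_pos hy]
    exact SeparationQuotient.mk_eq_mk.mpr
      (hpres g _ hx0K z hz (SeparationQuotient.mk_eq_mk.mp hmk))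
  -- continuity of the induced action
  have hcont' : ContinuousOn (fun p : G × SeparationQuotient E => act' p.1 p.2)
      (Set.univ ×ˢ K') := by
    haveI : CompactSpace K := isCompact_iff_compactSpace.mp hK
    set mkK : K → K' := fun x => ⟨mkE x, Set.mem_image_of_mem _ x.2⟩ with hmkK
    have hmkKc : Continuous mkK :=
      (hmkcont.comp continuous_subtype_val).subtype_mk _
    have hmkKs : Function.Surjective mkK := by
      rintro ⟨y, hy⟩
      obtain ⟨x, hx, rfl⟩ := hy
      exact ⟨⟨x, hx⟩, rfl⟩
    have hproper : IsProperMap mkK := hmkKc.isProperMap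
    have hqm : IsQuotientMap (Prod.map (id : G → G) mkK) := by
      refine IsClosedMap.isQuotientMap ?_ ?_ ?_
      · exact (isProperMap_id.prodMap hproper).isClosedMap
      · exact continuous_id.prodMap hmkKc
      · exact Function.Surjective.prodMap Function.surjective_id hmkKs
    have hΦ : Continuous (fun p : G × K' => act' p.1 (p.2 : SeparationQuotient E)) := by
      rw [hqm.continuous_iff]
      have heq : ((fun p : G × K' => act' p.1 (p.2 : SeparationQuotient E)) ∘
          Prod.map (id : G → G) mkK) = fun p : G × K => mkE (act p.1 (p.2 : E)) := by
        funext p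
        exact key p.1 (p.2 : E) p.2.2
      rw [heq]
      exact hmkcont.comp (hcont.comp_continuous
        (continuous_fst.prodMk (continuous_subtype_val.comp continuous_snd))
        (fun p => ⟨trivial, p.2.2⟩))
    rw [continuousOn_iff_continuous_restrict]
    have heq2 : (Set.univ ×ˢ K').restrict
        (fun p : G × SeparationQuotient E => act' p.1 p.2) =
        (fun p : G × K' => act' p.1 (p.2 : SeparationQuotient E)) ∘
          (fun q : (Set.univ ×ˢ K' : Set (G × SeparationQuotient E)) =>
            ((q : G × SeparationQuotient E).1, ⟨(q : G × SeparationQuotient E).2, q.2.2⟩)) :=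
      rfl
    change Continuous ((Set.univ ×ˢ K').restrict fun p : G × SeparationQuotient E => act' p.1 p.2)
    rw [heq2]
    exact hΦ.comp ((continuous_fst.comp continuous_subtype_val).prodMk
      ((continuous_snd.comp continuous_subtype_val).subtype_mk _))
  -- remaining structure of the induced action
  have hmaps' : ∀ g : G, Set.MapsTo (act' g) K' K' := by
    rintro g _ ⟨z, hz, rfl⟩
    rw [key g z hz]
    exact Set.mem_image_of_mem _ (hmaps g hz)
  have hone' : ∀ y ∈ K', act' 1 y = y := by
    rintro _ ⟨z, hz, rfl⟩
    rw [key 1 z hz, hone z hz]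
  have hmul' : ∀ g₁ g₂ : G, ∀ y ∈ K', act' (g₁ * g₂) y = act' g₁ (act' g₂ y) := by
    rintro g₁ g₂ _ ⟨z, hz, rfl⟩
    rw [key (g₁ * g₂) z hz, key g₂ z hz, key g₁ (act g₂ z) (hmaps g₂ hz),
      hmul g₁ g₂ z hz]
  have haff' : ∀ g : G, ∀ y₁ ∈ K', ∀ y₂ ∈ K', ∀ t : ℝ, 0 ≤ t → t ≤ 1 →
      act' g (t • y₁ + (1 - t) • y₂) = t • act' g y₁ + (1 - t) • act' g y₂ := by
    rintro g _ ⟨z₁, hz₁, rfl⟩ _ ⟨z₂, hz₂, rfl⟩ t h0 h1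
    have hcomb : t • z₁ + (1 - t) • z₂ ∈ K := hKc hz₁ hz₂ h0 (by linarith) (by ring)
    have hmkcomb : t • mkE z₁ + (1 - t) • mkE z₂ = mkE (t • z₁ + (1 - t) • z₂) := by
      rw [hlin.map_add, hlin.map_smul, hlin.map_smul]
    rw [hmkcomb, key g _ hcomb, key g z₁ hz₁, key g z₂ hz₂,
      haff g z₁ hz₁ z₂ hz₂ t h0 h1, hlin.map_add, hlin.map_smul, hlin.map_smul]
  -- the set of N-fixed points in K' is compact since E' is Hausdorff
  have hF'cpt : IsCompact {y ∈ K' | ∀ g ∈ N, act' g y = y} := by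
    haveI : CompactSpace K' := isCompact_iff_compactSpace.mp hK'
    have hclosed : IsClosed {y : K' | ∀ g ∈ N, act' g (y : SeparationQuotient E) = y} := by
      have : {y : K' | ∀ g ∈ N, act' g (y : SeparationQuotient E) = y} =
          ⋂ g ∈ (N : Set G), {y : K' | act' g (y : SeparationQuotient E) = y} := by
        ext y; simp
      rw [this]
      refine isClosed_biInter (fun g _ => ?_)
      have hcg : Continuous (fun y : K' => act' g (y : SeparationQuotient E)) := by
        have := hcont'.comp_continuous
          ((continuous_const.prodMk continuous_subtype_val :
            Continuous fun y : K' => ((g, (y : SeparationQuotient E)) : G × SeparationQuotient E)))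
          (fun y => ⟨trivial, y.2⟩)
        exact this
      exact isClosed_eq hcg continuous_subtype_val
    have himg : {y ∈ K' | ∀ g ∈ N, act' g y = y} =
        Subtype.val '' {y : K' | ∀ g ∈ N, act' g (y : SeparationQuotient E) = y} := by
      ext y
      constructor
      · rintro ⟨hyK, hy⟩; exact ⟨⟨y, hyK⟩, hy, rfl⟩
      · rintro ⟨⟨y, hyK⟩, hy, rfl⟩; exact ⟨hyK, hy⟩
    rw [himg]
    exact (hclosed.isCompact).image continuous_subtype_val
  -- apply the key lemma to the quotient action
  obtain ⟨y', hy'K', hy'fix⟩ := lemA G N hN hQ (SeparationQuotient E) K' hK' hK'c hK'ne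
    act' hmaps' hone' hmul' hcont' haff' hF'cpt
  -- pull back: the fiber of y' inside K
  set S : Set E := K ∩ mkE ⁻¹' {y'} with hSdef
  have hSne : S.Nonempty := by
    obtain ⟨x₀, hx₀K, hx₀⟩ := hy'K'
    exact ⟨x₀, hx₀K, by simp [hx₀]⟩
  have hScpt : IsCompact S :=
    hK.inter_right ((isClosed_singleton).preimage hmkcont)
  have hSconv : Convex ℝ S :=
    hKc.inter ((convex_singleton y').is_linear_preimage hlin)
  have hSK : S ⊆ K := Set.inter_subset_left
  have hSmaps : ∀ g : G, Set.MapsTo (act g) S S := by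
    intro g x hx
    have hxK := hx.1
    have hxy : mkE x = y' := hx.2
    refine ⟨hmaps g hxK, ?_⟩
    have : mkE (act g x) = act' g (mkE x) := (key g x hxK).symm
    simp only [Set.mem_preimage, Set.mem_singleton_iff]
    rw [this, hxy, hy'fix g]
  have hins : ∀ x ∈ S, ∀ z ∈ S, Inseparable x z := by
    intro x hx z hz
    have : mkE x = mkE z := by
      have h1 : mkE x = y' := hx.2
      have h2 : mkE z = y' := hz.2
      rw [h1, h2]
    exact SeparationQuotient.mk_eq_mk.mp this
  have hFS : IsCompact {x ∈ S | ∀ g ∈ N, act g x = x} :=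
    isCompact_of_pairwise_inseparable hins (fun x hx => hx.1)
  obtain ⟨x, hxS, hxfix⟩ := lemA G N hN hQ E S hScpt hSconv hSne act
    hSmaps (fun x hx => hone x (hSK hx))
    (fun g₁ g₂ x hx => hmul g₁ g₂ x (hSK hx))
    (hcont.mono (Set.prod_mono subset_rfl hSK))
    (fun g x hx y hy t h0 h1 => haff g x (hSK hx) y (hSK hy) t h0 h1)
    hFS
  exact ⟨x, hSK hxS, hxfix⟩
end

section
/- Let X and Y be compact Hausdorff topological spaces and f : X × Y → ℝ a function such that f(·, y) is lower semicontinuous and convexlike in its first argument for each y, and f(x, ·) is upper semicontinuous and concavelike in its second argument for each x. Then min_{x∈X} sup_{y∈Y} f(x,y) = max_{y∈Y} inf_{x∈X} f(x,y), i.e., the minimax equality holds and both outer extrema are attained. -/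
open Set Finset

/-- A function whose strict sublevel sets are open attains its maximum on a compact
nonempty space. -/
lemma kyfan_aux_exists_max {Y : Type} [TopologicalSpace Y] [CompactSpace Y] [Nonempty Y]
    (g : Y → ℝ) (hg : ∀ c : ℝ, IsOpen {y | g y < c}) : ∃ y₀, ∀ y, g y ≤ g y₀ := by
  by_contra h
  push_neg at h
  obtain ⟨s, hs⟩ := IsCompact.elim_finite_subcover (isCompact_univ (X := Y))
    (fun y : Y => {y' | g y' < g y}) (fun y => hg (g y))
    (fun y _ => by
      obtain ⟨y', hy'⟩ := h y
      exact Set.mem_iUnion.2 ⟨y', hy'⟩)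
  have hs_ne : s.Nonempty := by
    obtain ⟨y⟩ := ‹Nonempty Y›
    have := hs (Set.mem_univ y)
    simp only [Set.mem_iUnion] at this
    obtain ⟨i, hi, _⟩ := this
    exact ⟨i, hi⟩
  obtain ⟨b, hb, hbmax⟩ := s.exists_max_image g hs_ne
  have := hs (Set.mem_univ b)
  simp only [Set.mem_iUnion] at this
  obtain ⟨i, hi, hbi⟩ := this
  exact absurd (hbmax i hi) (not_le.2 hbi)

/-- A function whose strict superlevel sets are open attains its minimum on a compact
nonempty space. -/
lemma kyfan_aux_exists_min {Y : Type} [TopologicalSpace Y] [CompactSpace Y] [Nonempty Y]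
    (g : Y → ℝ) (hg : ∀ c : ℝ, IsOpen {y | c < g y}) : ∃ y₀, ∀ y, g y₀ ≤ g y := by
  obtain ⟨y₀, hy₀⟩ := kyfan_aux_exists_max (fun y => -g y) (fun c => by
    have : {y | -g y < c} = {y | -c < g y} := by ext y; simp; constructor <;> intro <;> linarith
    rw [this]; exact hg (-c))
  exact ⟨y₀, fun y => by have := hy₀ y; simpa using this⟩

/-- Concavelike combination: any finite convex combination of values `f x (y i)` is
dominated by `f x y₀` for a single `y₀`. -/
lemma kyfan_aux_concave_comb {X Y ι : Type} (f : X → Y → ℝ)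
    (hconc : ∀ y₁ y₂ : Y, ∀ t ∈ Set.Ioo (0 : ℝ) 1,
      ∃ y₃, ∀ x, t * f x y₁ + (1 - t) * f x y₂ ≤ f x y₃)
    (y : ι → Y) :
    ∀ (s : Finset ι) (μ : ι → ℝ), (∀ i ∈ s, 0 ≤ μ i) → (∑ i ∈ s, μ i) = 1 →
      ∃ y₀, ∀ x, ∑ i ∈ s, μ i * f x (y i) ≤ f x y₀ := by
  classical
  intro s
  induction s using Finset.induction_on with
  | empty => intro μ _ h1; simp at h1
  | @insert a s ha ih =>
    intro μ h0 h1
    rw [Finset.sum_insert ha] at h1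
    have hμa0 : 0 ≤ μ a := h0 a (Finset.mem_insert_self a s)
    have hrest0 : 0 ≤ ∑ i ∈ s, μ i :=
      Finset.sum_nonneg fun i hi => h0 i (Finset.mem_insert_of_mem hi)
    have hμa1 : μ a ≤ 1 := by linarith
    rcases eq_or_lt_of_le hμa0 with hz | hpos
    · obtain ⟨y₀, hy₀⟩ := ih μ (fun i hi => h0 i (Finset.mem_insert_of_mem hi)) (by linarith)
      exact ⟨y₀, fun x => by
        rw [Finset.sum_insert ha, ← hz]
        simpa using hy₀ x⟩
    rcases eq_or_lt_of_le hμa1 with hone | hlt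
    · -- μ a = 1, all other weights vanish
      have hsum0 : ∑ i ∈ s, μ i = 0 := by linarith
      have hall0 : ∀ i ∈ s, μ i = 0 :=
        (Finset.sum_eq_zero_iff_of_nonneg fun i hi => h0 i (Finset.mem_insert_of_mem hi)).1 hsum0
      refine ⟨y a, fun x => ?_⟩
      rw [Finset.sum_insert ha, hone]
      have : ∑ i ∈ s, μ i * f x (y i) = 0 :=
        Finset.sum_eq_zero fun i hi => by rw [hall0 i hi, zero_mul]
      simp [this]
    · -- 0 < μ a < 1
      have h1t : (0:ℝ) < 1 - μ a := by linarith
      have hsum : ∑ i ∈ s, μ i = 1 - μ a := by linarith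
      obtain ⟨y', hy'⟩ := ih (fun i => μ i / (1 - μ a))
        (fun i hi => div_nonneg (h0 i (Finset.mem_insert_of_mem hi)) h1t.le)
        (by rw [← Finset.sum_div, hsum, div_self h1t.ne'])
      obtain ⟨y₀, hy₀⟩ := hconc (y a) y' (μ a) ⟨hpos, hlt⟩
      refine ⟨y₀, fun x => ?_⟩
      have h2 := hy' x
      have h3 := hy₀ x
      have h4 : ∑ i ∈ s, μ i * f x (y i) = (1 - μ a) * ∑ i ∈ s, μ i / (1 - μ a) * f x (y i) := by
        rw [Finset.mul_sum]
        refine Finset.sum_congr rfl fun i hi => ?_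
        field_simp
      rw [Finset.sum_insert ha, h4]
      nlinarith [h2, h3, h1t]

/-- The key finite intersection step of Ky Fan's minimax theorem. -/
lemma kyfan_aux_finite {X Y : Type}
    [TopologicalSpace X] [CompactSpace X] [Nonempty X]
    (f : X → Y → ℝ) (β : ℝ)
    (hlsc : ∀ y, LowerSemicontinuous (fun x => f x y))
    (hconv : ∀ x₁ x₂ : X, ∀ t ∈ Set.Ioo (0 : ℝ) 1,
      ∃ x₃, ∀ y, f x₃ y ≤ t * f x₁ y + (1 - t) * f x₂ y)
    (hconc : ∀ y₁ y₂ : Y, ∀ t ∈ Set.Ioo (0 : ℝ) 1,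
      ∃ y₃, ∀ x, t * f x y₁ + (1 - t) * f x y₂ ≤ f x y₃)
    (hβ : ∀ y, ∃ x, f x y ≤ β)
    (t : Finset Y) : ∃ x, ∀ y ∈ t, f x y ≤ β := by
  classical
  by_contra hcon
  push_neg at hcon
  -- step 1: a uniform margin α > β
  have hUopen : ∀ c : ℝ, IsOpen {x : X | ∃ y ∈ t, c < f x y} := by
    intro c
    have : {x : X | ∃ y ∈ t, c < f x y} = ⋃ y ∈ t, {x | c < f x y} := by
      ext x; simp
    rw [this]
    exact isOpen_biUnion fun y _ => (hlsc y).isOpen_preimage c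
  obtain ⟨s, hs⟩ := IsCompact.elim_finite_subcover (isCompact_univ (X := X))
    (fun n : ℕ => {x | ∃ y ∈ t, β + 1 / (n + 1) < f x y}) (fun n => hUopen _)
    (fun x _ => by
      obtain ⟨y, hy, hxy⟩ := hcon x
      obtain ⟨n, hn⟩ := exists_nat_one_div_lt (show (0:ℝ) < f x y - β by linarith)
      exact Set.mem_iUnion.2 ⟨n, y, hy, by linarith⟩)
  have hs_ne : s.Nonempty := by
    obtain ⟨x⟩ := ‹Nonempty X›
    have := hs (Set.mem_univ x)
    simp only [Set.mem_iUnion] at this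
    obtain ⟨n, hn, _⟩ := this
    exact ⟨n, hn⟩
  obtain ⟨α, hβα, hα⟩ : ∃ α, β < α ∧ ∀ x : X, ∃ y ∈ t, α < f x y := by
    set N := s.max' hs_ne with hN
    refine ⟨β + 1 / ((N:ℝ) + 1), by
      have : (0:ℝ) < 1 / ((N:ℝ) + 1) := by positivity
      linarith, ?_⟩
    intro x
    have := hs (Set.mem_univ x)
    simp only [Set.mem_iUnion] at this
    obtain ⟨n, hn, y, hy, hxy⟩ := this
    refine ⟨y, hy, lt_of_le_of_lt ?_ hxy⟩
    have hnN : (n:ℝ) ≤ N := Nat.cast_le.2 (s.le_max' n hn)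
    have h1 : (0:ℝ) < (n:ℝ) + 1 := by positivity
    have h2 : 1 / ((N:ℝ) + 1) ≤ 1 / ((n:ℝ) + 1) := by
      apply one_div_le_one_div_of_le h1; linarith
    linarith
  -- t is nonempty
  obtain ⟨x₀⟩ := ‹Nonempty X›
  -- step 2: separation in the finite-dimensional space E
  set ι := {y // y ∈ t}
  set E := ι → ℝ
  set C : Set E := {z | ∃ x, ∀ i : ι, f x i.1 ≤ z i} with hCdef
  set D : Set E := Set.pi Set.univ (fun _ : ι => Set.Iio α) with hDdef
  have hDopen : IsOpen D := isOpen_set_pi Set.finite_univ (fun _ _ => isOpen_Iio)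
  have hDconv : Convex ℝ D := convex_pi (fun _ _ => convex_Iio α)
  have hCconv : Convex ℝ C := by
    rintro z₁ ⟨x₁, hx₁⟩ z₂ ⟨x₂, hx₂⟩ a b ha hb hab
    rcases eq_or_lt_of_le ha with ha0 | ha0
    · have hcomb : a • z₁ + b • z₂ = z₂ := by
        have hb1 : b = 1 := by linarith
        rw [← ha0, hb1, zero_smul, one_smul, zero_add]
      exact ⟨x₂, fun i => by rw [hcomb]; exact hx₂ i⟩
    rcases eq_or_lt_of_le hb with hb0 | hb0
    · have hcomb : a • z₁ + b • z₂ = z₁ := by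
        have ha1 : a = 1 := by linarith
        rw [← hb0, ha1, zero_smul, one_smul, add_zero]
      exact ⟨x₁, fun i => by rw [hcomb]; exact hx₁ i⟩
    · obtain ⟨x₃, hx₃⟩ := hconv x₁ x₂ a ⟨ha0, by linarith⟩
      refine ⟨x₃, fun i => ?_⟩
      have h1 := hx₃ i.1
      have h2 := hx₁ i
      have h3 := hx₂ i
      have hba : (1:ℝ) - a = b := by linarith
      have : (a • z₁ + b • z₂) i = a * z₁ i + b * z₂ i := rfl
      rw [this, ← hba] at *
      nlinarith [h1, h2, h3, ha0, hb0]
  have hdisj : Disjoint D C := by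
    rw [Set.disjoint_right]
    rintro z ⟨x, hx⟩ hzD
    obtain ⟨y, hy, hxy⟩ := hα x
    have h1 : f x y ≤ z ⟨y, hy⟩ := hx ⟨y, hy⟩
    have h2 : z ⟨y, hy⟩ < α := hzD ⟨y, hy⟩ (Set.mem_univ _)
    linarith
  obtain ⟨L, u, hLD, hLC⟩ := geometric_hahn_banach_open hDconv hDopen hCconv hdisj
  -- the coefficient vector
  set lam : ι → ℝ := fun i => L (fun j => if i = j then 1 else 0) with hlam
  have hLrep : ∀ z : E, L z = ∑ i, z i * lam i := by
    intro z
    conv_lhs => rw [pi_eq_sum_univ z]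
    rw [map_sum]
    simp [smul_eq_mul]
    rfl
  set z₀ : E := fun i => f x₀ i.1 with hz₀def
  have hz₀ : z₀ ∈ C := ⟨x₀, fun i => le_rfl⟩
  have hLz₀ : u ≤ L z₀ := hLC z₀ hz₀
  -- nonnegativity of coefficients
  have hnn : ∀ i, 0 ≤ lam i := by
    intro i
    by_contra hneg
    push_neg at hneg
    obtain ⟨c, hcdef⟩ : ∃ c : ℝ, c = (L z₀ - u + 1) / (-lam i) := ⟨_, rfl⟩
    have hcpos : 0 < c := by
      rw [hcdef]; apply div_pos (by linarith) (by linarith)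
    set e : E := fun j => if i = j then 1 else 0 with he
    have hLe : L e = lam i := rfl
    have hz'C : z₀ + c • e ∈ C := by
      refine ⟨x₀, fun j => ?_⟩
      have h1 : (0:ℝ) ≤ c * (if i = j then 1 else 0) := by positivity
      have h2 : (z₀ + c • e) j = z₀ j + c * (if i = j then 1 else 0) := rfl
      rw [h2]
      have hj : f x₀ j.1 ≤ z₀ j := le_rfl
      linarith
    have hLz' : L (z₀ + c • e) = L z₀ + c * lam i := by
      rw [map_add, map_smul, smul_eq_mul, hLe]
    have hcl : c * lam i = -(L z₀ - u + 1) := by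
      have hne : -lam i ≠ 0 := ne_of_gt (by linarith)
      rw [hcdef]
      rw [div_mul_eq_mul_div, div_eq_iff hne]
      ring
    have hge := hLC _ hz'C
    rw [hLz', hcl] at hge
    linarith
  -- positivity of total mass
  obtain ⟨S, hSdef⟩ : ∃ S : ℝ, S = ∑ i, lam i := ⟨_, rfl⟩
  have hSnn : 0 ≤ S := hSdef ▸ Finset.sum_nonneg fun i _ => hnn i
  have hDne : (fun _ : ι => α - 1) ∈ D := fun i _ => by
    simp only [Set.mem_Iio]; linarith
  have hSpos : 0 < S := by
    rcases eq_or_lt_of_le hSnn with h0 | h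
    · exfalso
      have hall : ∀ i ∈ Finset.univ (α := ι), lam i = 0 :=
        (Finset.sum_eq_zero_iff_of_nonneg fun i _ => hnn i).1 (hSdef ▸ h0.symm)
      have hL0 : ∀ z : E, L z = 0 := by
        intro z
        rw [hLrep z]
        exact Finset.sum_eq_zero fun i hi => by rw [hall i hi, mul_zero]
      have h1 := hLD _ hDne
      rw [hL0] at h1
      rw [hL0] at hLz₀
      linarith
    · exact h
  -- α * S ≤ u
  have hαS : α * S ≤ u := by
    by_contra hlt
    push_neg at hlt
    obtain ⟨ε, hεdef⟩ : ∃ ε : ℝ, ε = (α * S - u) / (2 * S) := ⟨_, rfl⟩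
    have hεpos : 0 < ε := by
      rw [hεdef]; exact div_pos (by linarith) (by linarith)
    have hmem : (fun _ : ι => α - ε) ∈ D := fun i _ => by
      simp only [Set.mem_Iio]; linarith
    have h1 := hLD _ hmem
    rw [hLrep] at h1
    have h2 : ∑ i, (α - ε) * lam i = (α - ε) * S := by
      rw [hSdef, Finset.mul_sum]
    rw [h2] at h1
    have hεS : ε * S = (α * S - u) / 2 := by
      rw [hεdef]; field_simp
    have hexp : (α - ε) * S = α * S - ε * S := by ring
    linarith
  -- the averaged inequality
  have hkey : ∀ x : X, α ≤ ∑ i, (lam i / S) * f x i.1 := by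
    intro x
    have hmem : (fun i : ι => f x i.1) ∈ C := ⟨x, fun i => le_rfl⟩
    have h1 := hLC _ hmem
    rw [hLrep] at h1
    have h2 : ∑ i, (lam i / S) * f x i.1 = (∑ i, f x i.1 * lam i) / S := by
      rw [Finset.sum_div]
      refine Finset.sum_congr rfl fun i _ => ?_
      field_simp
    rw [h2, le_div_iff₀ hSpos]
    linarith
  -- combine via concavelikeness
  obtain ⟨y₀, hy₀⟩ := kyfan_aux_concave_comb f hconc (fun i : ι => i.1) Finset.univ
    (fun i => lam i / S) (fun i _ => div_nonneg (hnn i) hSnn)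
    (by rw [← Finset.sum_div, ← hSdef, div_self hSpos.ne'])
  obtain ⟨x, hx⟩ := hβ y₀
  have h1 := hkey x
  have h2 := hy₀ x
  linarith

/-- Ky Fan's minimax theorem: if `X` and `Y` are compact Hausdorff spaces and
`f : X × Y → ℝ` is lower semicontinuous and convexlike in its first argument and upper
semicontinuous and concavelike in its second argument, then
`min_{x} sup_{y} f(x,y) = max_{y} inf_{x} f(x,y)`, both outer extrema being attained. -/
theorem ky_fan_minimax
    (X Y : Type)
    [TopologicalSpace X] [CompactSpace X] [T2Space X] [Nonempty X]
    [TopologicalSpace Y] [CompactSpace Y] [T2Space Y] [Nonempty Y]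
    (f : X → Y → ℝ)
    (hlsc : ∀ y, LowerSemicontinuous (fun x => f x y))
    (hconvexlike : ∀ x₁ x₂ : X, ∀ t ∈ Set.Ioo (0 : ℝ) 1,
      ∃ x₃, ∀ y, f x₃ y ≤ t * f x₁ y + (1 - t) * f x₂ y)
    (husc : ∀ x, UpperSemicontinuous (fun y => f x y))
    (hconcavelike : ∀ y₁ y₂ : Y, ∀ t ∈ Set.Ioo (0 : ℝ) 1,
      ∃ y₃, ∀ x, t * f x y₁ + (1 - t) * f x y₂ ≤ f x y₃) :
    ∃ (x₀ : X) (y₀ : Y),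
      (∀ x, (⨆ y, f x₀ y) ≤ ⨆ y, f x y) ∧
      (∀ y, (⨅ x, f x y) ≤ ⨅ x, f x y₀) ∧
      (⨆ y, f x₀ y) = ⨅ x, f x y₀ := by
  classical
  -- maxima in y and minima in x are attained
  have hmax : ∀ x : X, ∃ y', ∀ y, f x y ≤ f x y' := by
    intro x
    exact kyfan_aux_exists_max (fun y => f x y) (fun c => (husc x).isOpen_preimage c)
  have hmin : ∀ y : Y, ∃ x', ∀ x, f x' y ≤ f x y := by
    intro y
    exact kyfan_aux_exists_min (fun x => f x y) (fun c => (hlsc y).isOpen_preimage c)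
  -- basic facts about the real inf/sup
  have hbddB : ∀ y : Y, BddBelow (Set.range fun x => f x y) := by
    intro y
    obtain ⟨x', hx'⟩ := hmin y
    exact ⟨f x' y, by rintro r ⟨x, rfl⟩; exact hx' x⟩
  have hbddA : ∀ x : X, BddAbove (Set.range fun y => f x y) := by
    intro x
    obtain ⟨y', hy'⟩ := hmax x
    exact ⟨f x y', by rintro r ⟨y, rfl⟩; exact hy' y⟩
  have hginf : ∀ (y : Y) (x' : X), (∀ x, f x' y ≤ f x y) → (⨅ x, f x y) = f x' y := by
    intro y x' h
    exact le_antisymm (ciInf_le (hbddB y) x') (le_ciInf h)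
  set g : Y → ℝ := fun y => ⨅ x, f x y with hg
  -- g is "upper semicontinuous": sublevel sets are open
  have hgopen : ∀ c : ℝ, IsOpen {y | g y < c} := by
    intro c
    have heq : {y | g y < c} = ⋃ x, {y | f x y < c} := by
      ext y
      simp only [Set.mem_setOf_eq, Set.mem_iUnion]
      constructor
      · intro h
        obtain ⟨x', hx'⟩ := hmin y
        refine ⟨x', ?_⟩
        rw [← hginf y x' hx']
        exact h
      · rintro ⟨x, hx⟩
        exact lt_of_le_of_lt (ciInf_le (hbddB y) x) hx
    rw [heq]
    exact isOpen_iUnion fun x => (husc x).isOpen_preimage c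
  obtain ⟨y₀, hy₀⟩ := kyfan_aux_exists_max g hgopen
  set β : ℝ := g y₀ with hβdef
  have hβ : ∀ y, ∃ x, f x y ≤ β := by
    intro y
    obtain ⟨x', hx'⟩ := hmin y
    refine ⟨x', ?_⟩
    rw [← hginf y x' hx']
    exact hy₀ y
  -- find x₀ in the intersection of all sublevel sets
  have hiInter : (⋂ y : Y, {x : X | f x y ≤ β}).Nonempty := by
    by_contra hne
    rw [Set.not_nonempty_iff_eq_empty] at hne
    obtain ⟨t, ht⟩ := IsCompact.elim_finite_subfamily_closed (isCompact_univ (X := X))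
      (fun y : Y => {x : X | f x y ≤ β})
      (fun y => (hlsc y).isClosed_preimage β)
      (by rw [Set.univ_inter, hne])
    obtain ⟨x, hx⟩ := kyfan_aux_finite f β hlsc hconvexlike hconcavelike hβ t
    have : x ∈ Set.univ ∩ ⋂ y ∈ t, {x : X | f x y ≤ β} := by
      refine ⟨Set.mem_univ x, ?_⟩
      simp only [Set.mem_iInter]
      exact fun y hy => hx y hy
    rw [ht] at this
    exact this
  obtain ⟨x₀, hx₀mem⟩ := hiInter
  have hx₀ : ∀ y, f x₀ y ≤ β := by
    intro y
    exact Set.mem_iInter.1 hx₀mem y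
  -- conclude
  have hfy₀ : ∀ x, β ≤ f x y₀ := fun x => ciInf_le (hbddB y₀) x
  refine ⟨x₀, y₀, ?_, ?_, ?_⟩
  · intro x
    calc (⨆ y, f x₀ y) ≤ β := ciSup_le hx₀
      _ ≤ f x y₀ := hfy₀ x
      _ ≤ ⨆ y, f x y := le_ciSup (hbddA x) y₀
  · intro y
    exact hy₀ y
  · refine le_antisymm (ciSup_le hx₀) ?_
    calc (⨅ x, f x y₀) = β := rfl
      _ ≤ f x₀ y₀ := hfy₀ x₀
      _ ≤ ⨆ y, f x₀ y := le_ciSup (hbddA x₀) y₀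
end
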